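/- arXiv:1809.05190 — 3 statements merged into one kernel-verified Lean document; each statement's English description precedes it below -/
import Mathlib

section
/- The preference coverage function PCov(S) = |{j : ∑_{i∈S} P_{ij} > 0}| is not submodular in general: there exist a matrix P, sets S ⊆ T, and an element w ∉ T such that PCov(S ∪ {w}) − PCov(S) < PCov(T ∪ {w}) − PCov(T). -/
open scoped Classical

noncomputable def PCov {n m : ℕ} (P : Fin n → Fin m → ℝ) (S : Finset (Fin n)) : ℕ :=
  (Finset.univ.filter (fun j : Fin m => 0 < ∑ i ∈ S, P i j)).card

/-- The preference coverage function is not submodular in general. -/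
theorem pcov_not_submodular :
    ∃ (n m : ℕ) (P : Fin n → Fin m → ℝ) (S T : Finset (Fin n)) (w : Fin n),
      S ⊆ T ∧ w ∉ T ∧
      (PCov P (insert w S) : ℤ) - PCov P S < (PCov P (insert w T) : ℤ) - PCov P T := by
  refine ⟨3, 1, fun (i : Fin 3) (_ : Fin 1) => if i = 0 then (2:ℝ) else if i = 1 then -3 else 2,
    ({1} : Finset (Fin 3)), ({0, 1} : Finset (Fin 3)), 2, by decide, by decide, ?_⟩
  have h1 : PCov ((fun i _ => if i = 0 then (2:ℝ) else if i = 1 then -3 else 2) : Fin 3 → Fin 1 → ℝ)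
      (insert 2 {1}) = 0 := by
    unfold PCov
    rw [Finset.card_eq_zero, Finset.filter_eq_empty_iff]
    intro j _
    simp [Finset.sum_insert, Fin.sum_univ_succ]
    norm_num
  have h2 : PCov ((fun i _ => if i = 0 then (2:ℝ) else if i = 1 then -3 else 2) : Fin 3 → Fin 1 → ℝ)
      ({1} : Finset (Fin 3)) = 0 := by
    unfold PCov
    rw [Finset.card_eq_zero, Finset.filter_eq_empty_iff]
    intro j _
    norm_num
  have h3 : PCov ((fun i _ => if i = 0 then (2:ℝ) else if i = 1 then -3 else 2) : Fin 3 → Fin 1 → ℝ)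
      (insert 2 {0, 1}) = 1 := by
    unfold PCov
    rw [Finset.card_eq_one]
    refine ⟨0, ?_⟩
    ext j
    simp [Finset.sum_insert, Finset.mem_filter]
    norm_num [show ((2:Fin 3) : Fin 3) ≠ 0 by decide]
  have h4 : PCov ((fun i _ => if i = 0 then (2:ℝ) else if i = 1 then -3 else 2) : Fin 3 → Fin 1 → ℝ)
      ({0, 1} : Finset (Fin 3)) = 0 := by
    unfold PCov
    rw [Finset.card_eq_zero, Finset.filter_eq_empty_iff]
    intro j _
    norm_num
  rw [h1, h2, h3, h4]
  norm_num
end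

section
/- For injective x and y on Fin n with n ≥ 2, τ(x,y,n) = 1 if and only if x and y induce the same strict order, i.e., for all i, j: x_i < x_j ↔ y_i < y_j. -/
open scoped Classical

noncomputable def kendallTau (n : ℕ) (x y : Fin n → ℝ) : ℝ :=
  2 / ((n : ℝ) * ((n : ℝ) - 1)) *
    ∑ p ∈ Finset.univ.filter (fun p : Fin n × Fin n => p.1 < p.2),
      Real.sign (x p.1 - x p.2) * Real.sign (y p.1 - y p.2)

/-!
Each summand `sign (x i - x j) * sign (y i - y j)` is at most `1`, and there are `n.choose 2`
of them, so `τ = 1` exactly when every pair `i < j` is concordant. Injectivity of `x` rules out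
a zero sign, so concordance of all pairs means the two sign patterns agree, which is the same
as `x` and `y` inducing the same strict order.
-/

open Finset

namespace Real

lemma sign_eq_neg_one_iff {r : ℝ} : sign r = -1 ↔ r < 0 := by
  refine ⟨fun h => ?_, sign_of_neg⟩
  rcases lt_trichotomy r 0 with hr | rfl | hr
  · exact hr
  · norm_num [sign_zero] at h
  · norm_num [sign_of_pos hr] at h

lemma sign_mul_sign_le_one (a b : ℝ) : sign a * sign b ≤ 1 := by
  rcases sign_apply_eq a with ha | ha | ha <;> rcases sign_apply_eq b with hb | hb | hb <;>
    norm_num [ha, hb]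

lemma sign_mul_sign_eq_one_iff {a b : ℝ} :
    sign a * sign b = 1 ↔ a ≠ 0 ∧ sign a = sign b := by
  rw [ne_eq, ← sign_eq_zero_iff]
  rcases sign_apply_eq a with ha | ha | ha <;> rcases sign_apply_eq b with hb | hb | hb <;>
    norm_num [ha, hb]

lemma forall_sign_sub_eq_iff {ι : Type*} {f g : ι → ℝ} :
    (∀ i j, sign (f i - f j) = sign (g i - g j)) ↔ ∀ i j, f i < f j ↔ g i < g j := by
  refine ⟨fun h i j => ?_, fun h i j => ?_⟩
  · rw [← sub_neg, ← sign_eq_neg_one_iff, h, sign_eq_neg_one_iff, sub_neg]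
  · rcases lt_trichotomy (f i) (f j) with hf | hf | hf
    · rw [sign_of_neg (sub_neg.2 hf), sign_of_neg (sub_neg.2 ((h i j).1 hf))]
    · have hg : g i = g j := le_antisymm (not_lt.1 fun hg => hf.not_gt ((h j i).2 hg))
        (not_lt.1 fun hg => hf.not_lt ((h i j).2 hg))
      rw [hf, hg, sub_self, sub_self]
    · rw [sign_of_pos (sub_pos.2 hf), sign_of_pos (sub_pos.2 ((h j i).1 hf))]

lemma forall_lt_sign_sub_eq_iff {ι : Type*} [LinearOrder ι] {f g : ι → ℝ} :
    (∀ i j, i < j → sign (f i - f j) = sign (g i - g j)) ↔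
      ∀ i j, sign (f i - f j) = sign (g i - g j) := by
  refine ⟨fun h i j => ?_, fun h i j _ => h i j⟩
  rcases lt_trichotomy i j with hij | rfl | hij
  · exact h i j hij
  · simp
  · rw [← neg_sub (f j), ← neg_sub (g j), sign_neg, sign_neg, h j i hij]

end Real

lemma Finset.sum_eq_card_iff_forall_eq_one {ι R : Type*} [AddCommMonoidWithOne R] [PartialOrder R]
    [IsOrderedCancelAddMonoid R] {s : Finset ι} {f : ι → R}
    (hf : ∀ i ∈ s, f i ≤ 1) : ∑ i ∈ s, f i = #s ↔ ∀ i ∈ s, f i = 1 := by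
  rw [← sum_eq_sum_iff_of_le hf, sum_const, nsmul_one]

lemma kendallTau_eq_sum_div_choose (n : ℕ) (x y : Fin n → ℝ) :
    kendallTau n x y = (∑ p ∈ univ.filter (fun p : Fin n × Fin n => p.1 < p.2),
      Real.sign (x p.1 - x p.2) * Real.sign (y p.1 - y p.2)) / n.choose 2 := by
  rw [kendallTau, Nat.cast_choose_two, div_div_eq_mul_div, div_mul_eq_mul_div, mul_comm]

theorem kendallTau_eq_one_iff_general {n : ℕ} (hn : 2 ≤ n) (x y : Fin n → ℝ)
    (hx : Function.Injective x) :
    kendallTau n x y = 1 ↔ ∀ i j, x i < x j ↔ y i < y j := by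
  have hchoose : (n.choose 2 : ℝ) ≠ 0 := by exact_mod_cast (Nat.choose_pos hn).ne'
  have hcard : #(univ.filter fun p : Fin n × Fin n => p.1 < p.2) = n.choose 2 := by
    simpa using Fintype.card_product_filter_lt (α := Fin n)
  rw [kendallTau_eq_sum_div_choose, div_eq_one_iff_eq hchoose, ← hcard,
    sum_eq_card_iff_forall_eq_one fun _ _ => Real.sign_mul_sign_le_one _ _,
    ← Real.forall_sign_sub_eq_iff, ← Real.forall_lt_sign_sub_eq_iff]
  simp +contextual [Real.sign_mul_sign_eq_one_iff, sub_ne_zero, hx.ne_iff, ne_of_lt]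

/-- For injective score vectors, Kendall's tau equals 1 iff the two rankings
induce the same strict order. -/
theorem kendallTau_eq_one_iff {n : ℕ} (hn : 2 ≤ n) (x y : Fin n → ℝ)
    (hx : Function.Injective x) (hy : Function.Injective y) :
    kendallTau n x y = 1 ↔ ∀ i j, x i < x j ↔ y i < y j :=
  kendallTau_eq_one_iff_general hn x y hx
end

section
/- The greedy algorithm for Maximum Preference Coverage can be arbitrarily bad in the presence of negative entries: for every n ≥ 2 there exists a preference matrix P for which greedy selection (choosing at each step the term with maximum marginal coverage gain) achieves coverage 1 while the optimum achieves coverage n. -/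
/-!
Give each term `i` a level `ℓ i` among the columns and let it vote `+1` for column `ℓ i`
and `-1` for every later column. Two terms together cover only the column of the lower
level, so greedy stops after a single term. With `2 ^ j` terms at level `j` (term `i` at
level `⌊log₂ (i + 1)⌋`), however, column `j` receives `2 ^ j - (2 ^ j - 1) = 1` from the
set of all terms, which therefore covers every column.
-/

open scoped Classical

/-- Marginal coverage gain of adding term `w` to the selection `T`. -/
noncomputable def gain {n m : ℕ} (P : Fin n → Fin m → ℝ) (T : Finset (Fin n))
    (w : Fin n) : ℤ :=
  (PCov P (insert w T) : ℤ) - PCov P T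

/-- Selections reachable by the greedy algorithm: start from `∅` and repeatedly
add a term of maximum marginal gain, provided that gain is positive. -/
inductive GreedyReach {n m : ℕ} (P : Fin n → Fin m → ℝ) : Finset (Fin n) → Prop
  | empty : GreedyReach P ∅
  | step (T : Finset (Fin n)) (w : Fin n) : GreedyReach P T → w ∉ T →
      0 < gain P T w → (∀ w', gain P T w' ≤ gain P T w) →
      GreedyReach P (insert w T)

/-- The greedy algorithm stops at `T` when no term gives positive marginal gain. -/
def GreedyTerminal {n m : ℕ} (P : Fin n → Fin m → ℝ) (T : Finset (Fin n)) : Prop :=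
  ∀ w, gain P T w ≤ 0

open Finset

section Greedy

variable {N m : ℕ} (P : Fin N → Fin m → ℝ)

@[simp]
lemma pcov_empty : PCov P ∅ = 0 := by
  simp [PCov]

lemma gain_empty (w : Fin N) : gain P ∅ w = PCov P {w} := by
  simp [gain]

lemma greedyReach_eq_empty_or_singleton (hpair : ∀ u w, PCov P {u, w} ≤ 1)
    {T : Finset (Fin N)} (hT : GreedyReach P T) :
    T = ∅ ∨ ∃ u, T = {u} ∧ PCov P {u} = 1 := by
  induction hT with
  | empty => exact Or.inl rfl
  | step T w _ _ hgain _ ih =>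
    rcases ih with rfl | ⟨u, rfl, hu⟩
    · have hw : PCov P {w} ≤ 1 := by simpa using hpair w w
      rw [gain_empty] at hgain
      exact Or.inr ⟨w, rfl, by omega⟩
    · have := hpair w u
      rw [gain, hu] at hgain
      omega

theorem greedy_pcov_eq_one (hpair : ∀ u w, PCov P {u, w} ≤ 1) (hpos : ∃ w, PCov P {w} ≠ 0)
    {T : Finset (Fin N)} (hT : GreedyReach P T) (hterm : GreedyTerminal P T) :
    PCov P T = 1 := by
  rcases greedyReach_eq_empty_or_singleton P hpair hT with rfl | ⟨u, rfl, hu⟩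
  · obtain ⟨w, hw⟩ := hpos
    have := hterm w
    rw [gain_empty] at this
    omega
  · exact hu

end Greedy

section LevelMatrix

variable {N n : ℕ} (ℓ : Fin N → Fin n)

def levelMatrix (i : Fin N) (j : Fin n) : ℝ :=
  if j = ℓ i then 1 else if ℓ i < j then -1 else 0

lemma pcov_levelMatrix_singleton (i : Fin N) : PCov (levelMatrix ℓ) {i} = 1 := by
  have : univ.filter (fun j => 0 < ∑ k ∈ {i}, levelMatrix ℓ k j) = {ℓ i} := by
    ext j
    simp only [mem_filter, mem_univ, true_and, sum_singleton, mem_singleton, levelMatrix]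
    split_ifs <;> norm_num [*]
  rw [PCov, this, card_singleton]

lemma eq_min_of_sum_pair_levelMatrix_pos {u w : Fin N} {j : Fin n}
    (h : 0 < ∑ k ∈ {u, w}, levelMatrix ℓ k j) : j = min (ℓ u) (ℓ w) := by
  rcases eq_or_ne u w with rfl | huw
  · rw [pair_eq_singleton, sum_singleton, levelMatrix] at h
    rw [min_self]
    split_ifs at h with h₁ <;> first | exact h₁ | norm_num at h
  · rw [sum_pair huw, levelMatrix, levelMatrix] at h
    rw [Fin.ext_iff, Fin.coe_min]
    split_ifs at h <;> simp only [Fin.ext_iff, Fin.lt_def] at * <;>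
      first | omega | norm_num at h

lemma pcov_levelMatrix_pair_le_one (u w : Fin N) : PCov (levelMatrix ℓ) {u, w} ≤ 1 :=
  card_le_one.mpr fun _ ha _ hb =>
    (eq_min_of_sum_pair_levelMatrix_pos ℓ (mem_filter.mp ha).2).trans
      (eq_min_of_sum_pair_levelMatrix_pos ℓ (mem_filter.mp hb).2).symm

lemma levelMatrix_eq (i : Fin N) (j : Fin n) :
    levelMatrix ℓ i j = (if ℓ i ≤ j then 1 else 0) - 2 * (if ℓ i < j then 1 else 0) := by
  rw [levelMatrix]
  split_ifs <;> simp only [Fin.ext_iff, Fin.lt_def, Fin.le_def] at * <;>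
    first | omega | norm_num

lemma sum_levelMatrix (j : Fin n) :
    ∑ i, levelMatrix ℓ i j = #{i | ℓ i ≤ j} - 2 * (#{i | ℓ i < j} : ℝ) := by
  simp only [levelMatrix_eq, sum_sub_distrib, ← mul_sum, sum_boole]

lemma pcov_levelMatrix_univ (h : ∀ j, 2 * #{i | ℓ i < j} < #{i | ℓ i ≤ j}) :
    PCov (levelMatrix ℓ) univ = n := by
  rw [PCov, filter_true_of_mem, card_univ, Fintype.card_fin]
  intro j _
  rw [sum_levelMatrix, sub_pos]
  exact_mod_cast h j

end LevelMatrix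

section Dyadic

def dyadicLevel (n : ℕ) (i : Fin (2 ^ n - 1)) : Fin n :=
  ⟨Nat.log 2 (i + 1), Nat.log_lt_of_lt_pow (by omega) (by have := i.isLt; omega)⟩

lemma card_dyadicLevel_lt {n k : ℕ} (hk : k ≤ n) :
    #{i | (dyadicLevel n i : ℕ) < k} = 2 ^ k - 1 := by
  have hpow : 2 ^ k ≤ 2 ^ n := Nat.pow_le_pow_right two_pos hk
  have : 1 ≤ 2 ^ k := Nat.one_le_two_pow
  rw [filter_congr (q := fun i : Fin (2 ^ n - 1) => (i : ℕ) < 2 ^ k - 1), Fin.card_filter_val_lt]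
  · omega
  · intro i _
    rw [dyadicLevel, Nat.log_lt_iff_lt_pow one_lt_two (by omega)]
    omega

lemma two_mul_card_dyadicLevel_lt (n : ℕ) (j : Fin n) :
    2 * #{i | dyadicLevel n i < j} < #{i | dyadicLevel n i ≤ j} := by
  simp only [Fin.lt_def, Fin.le_def, ← Nat.lt_succ_iff]
  rw [card_dyadicLevel_lt j.isLt.le, card_dyadicLevel_lt j.isLt, pow_succ]
  have : 1 ≤ 2 ^ (j : ℕ) := Nat.one_le_two_pow
  omega

end Dyadic

/-- Greedy can be arbitrarily bad with negative entries: for every `n ≥ 2` there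
is a preference matrix on which every terminal greedy run achieves coverage 1
while the optimum achieves coverage `n`. -/
theorem greedy_arbitrarily_bad (n : ℕ) (hn : 2 ≤ n) :
    ∃ (N M : ℕ) (P : Fin N → Fin M → ℝ),
      (∀ T : Finset (Fin N), GreedyReach P T → GreedyTerminal P T → PCov P T = 1) ∧
      (∃ S : Finset (Fin N), PCov P S = n) := by
  have hN : 0 < 2 ^ n - 1 := Nat.sub_pos_of_lt (Nat.one_lt_two_pow (by omega))
  refine ⟨2 ^ n - 1, n, levelMatrix (dyadicLevel n), fun T => ?_, univ, ?_⟩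
  · exact greedy_pcov_eq_one _ (pcov_levelMatrix_pair_le_one _)
      ⟨⟨0, hN⟩, by simp [pcov_levelMatrix_singleton]⟩
  · exact pcov_levelMatrix_univ _ (two_mul_card_dyadicLevel_lt n)
end
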